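/- (Computing the invariant η at a point at infinity.) Let s ≥ 1, e ≥ 1 be natural numbers and let P, Q, C, K ∈ ℂ[x,y] satisfy ∂ₓC·Q − ∂_yC·P = C·K; set W = ∂ₓQ − ∂_yP. Suppose P', Q', C', K', W' ∈ ℂ[y,z] satisfy ι(P') = z^s·φ(P), ι(Q') = z^s·φ(Q), ι(C') = z^e·φ(C), ι(K') = z^{s−1}·φ(K), ι(W') = z^{s−1}·φ(W). Let a ∈ ℂ² be a point (in the chart at infinity), let k_z := −Q'(a), let w := (∂_y(−(P'+y·Q')) − ∂_z(z·Q'))(a), and let k ∈ ℂ be any scalar with (−∂_yC'·(P'+y·Q') − z·∂_zC'·Q')(a) = C'(a)·k and C'(a) ≠ 0. Then K'(a) = k − e·k_z and W'(a) = w − (s+2)·k_z. (In the paper's notation: if η'(ω,C,a) = (k_z : k : w) then η(ω,C,a) = (k − (deg C)·k_z : w − (deg ω + 2)·k_z), i.e., η is the linear projection of η' from the point (1 : deg C : deg ω + 2).) -/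

import Mathlib

set_option synthInstance.maxHeartbeats 1000000
set_option maxHeartbeats 1000000
set_option linter.unusedTactic false
set_option linter.unnecessarySimpa false


open MvPolynomial

/-- `S = ℂ[y,z]` with `y = X 0`, `z = X 1`. -/
noncomputable abbrev Spoly : Type := MvPolynomial (Fin 2) ℂ

/-- The canonical embedding `ι : ℂ[y,z] → ℂ(y,z)`. -/
noncomputable def ι : Spoly →+* FractionRing Spoly := algebraMap Spoly (FractionRing Spoly)

/-- The map `φ : ℂ[x,y] → ℂ(y,z)` determined by `x ↦ z⁻¹`, `y ↦ y·z⁻¹`. -/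
noncomputable def φ : MvPolynomial (Fin 2) ℂ →ₐ[ℂ] FractionRing Spoly :=
  aeval ![(ι (X 1))⁻¹, ι (X 0) * (ι (X 1))⁻¹]

lemma iota_inj : Function.Injective ι := IsFractionRing.injective Spoly (FractionRing Spoly)

lemma u_ne : ι (X 1) ≠ 0 := by
  rw [ι, map_ne_zero_iff _ (IsFractionRing.injective Spoly (FractionRing Spoly))]
  exact X_ne_zero 1

/-- `H M G` : the polynomial with `ι (H M G) = z^M φ G` when `M ≥ deg G`. -/
noncomputable def HH (M : ℕ) (G : MvPolynomial (Fin 2) ℂ) : Spoly :=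
  ∑ d ∈ G.support, (C (coeff d G) * X 0 ^ (d 1) * X 1 ^ (M - (d 0 + d 1)) : Spoly)

lemma phi_monomial (d : Fin 2 →₀ ℕ) (c : ℂ) :
    φ (monomial d c) = (algebraMap ℂ _ c) * (ι (X 1))⁻¹ ^ (d 0) * (ι (X 0) * (ι (X 1))⁻¹) ^ (d 1) := by
  rw [φ, aeval_monomial]
  rw [Finsupp.prod_fintype _ _ (fun i => pow_zero _)]
  rw [Fin.prod_univ_two]
  simp [mul_assoc]

lemma deg_le {G : MvPolynomial (Fin 2) ℂ} {M : ℕ} (hM : G.totalDegree ≤ M)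
    {d : Fin 2 →₀ ℕ} (hd : d ∈ G.support) : d 0 + d 1 ≤ M := by
  have := MvPolynomial.le_totalDegree (s := d) hd
  have h2 : (d.sum fun _ n => n) = d 0 + d 1 := by
    rw [Finsupp.sum_fintype _ _ (fun i => rfl), Fin.sum_univ_two]
  omega

lemma iota_HH {G : MvPolynomial (Fin 2) ℂ} {M : ℕ} (hM : G.totalDegree ≤ M) :
    ι (HH M G) = ι (X 1) ^ M * φ G := by
  conv_rhs => rw [G.as_sum]
  rw [HH, map_sum, map_sum, Finset.mul_sum]
  refine Finset.sum_congr rfl fun d hd => ?_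
  have hle : d 0 + d 1 ≤ M := deg_le hM hd
  rw [phi_monomial, map_mul, map_mul, map_pow, map_pow]
  have hC : ι (C (coeff d G)) = algebraMap ℂ _ (coeff d G) := by
    rw [ι, ← MvPolynomial.algebraMap_eq, ← IsScalarTower.algebraMap_apply ℂ Spoly (FractionRing Spoly)]
  rw [hC]
  have hu := u_ne
  have hpow : ι (X 1) ^ (M - (d 0 + d 1)) = ι (X 1) ^ M * (ι (X 1))⁻¹ ^ (d 0) * (ι (X 1))⁻¹ ^ (d 1) := by
    rw [pow_sub₀ _ hu hle]
    field_simp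
    rw [one_div, pow_add, show ι (X 1) ^ d 0 * ι (X 1) ^ d 1 * (ι (X 1))⁻¹ ^ d 0 * (ι (X 1))⁻¹ ^ d 1 = (ι (X 1) * (ι (X 1))⁻¹) ^ d 0 * (ι (X 1) * (ι (X 1))⁻¹) ^ d 1 by ring, mul_inv_cancel₀ hu]
    simp
  rw [hpow]
  ring

lemma pd_term0 (c : ℂ) (j k : ℕ) :
    pderiv 0 (C c * X 0 ^ j * X 1 ^ k : Spoly) = (j : ℂ) • (C c * X 0 ^ (j-1) * X 1 ^ k) := by
  simp only [pderiv_mul, pderiv_C, (pderiv (0 : Fin 2)).leibniz_pow, pderiv_X_self,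
    pderiv_X_of_ne (show (1:Fin 2) ≠ 0 by decide), smul_eq_mul, MvPolynomial.smul_eq_C_mul, MvPolynomial.C_eq_coe_nat]
  ring

lemma pd_term1 (c : ℂ) (j k : ℕ) :
    pderiv 1 (C c * X 0 ^ j * X 1 ^ k : Spoly) = (k : ℂ) • (C c * X 0 ^ j * X 1 ^ (k-1)) := by
  simp only [pderiv_mul, pderiv_C, (pderiv (1 : Fin 2)).leibniz_pow, pderiv_X_self,
    pderiv_X_of_ne (show (0:Fin 2) ≠ 1 by decide), smul_eq_mul, MvPolynomial.smul_eq_C_mul, MvPolynomial.C_eq_coe_nat]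
  ring

lemma HH_eq_sum (M : ℕ) (G : MvPolynomial (Fin 2) ℂ) :
    HH M G = Finsupp.sum (AddMonoidAlgebra.coeff G) (fun d c => C c * X 0 ^ (d 1) * X 1 ^ (M - (d 0 + d 1))) := rfl

lemma HH_add (M : ℕ) (p q : MvPolynomial (Fin 2) ℂ) : HH M (p + q) = HH M p + HH M q := by
  rw [HH_eq_sum, HH_eq_sum, HH_eq_sum, AddMonoidAlgebra.coeff_add]
  exact Finsupp.sum_add_index' (fun d => by simp) (fun d c1 c2 => by rw [map_add, add_mul, add_mul])

lemma HH_monomial (M : ℕ) (d : Fin 2 →₀ ℕ) (c : ℂ) :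
    HH M (monomial d c) = C c * X 0 ^ (d 1) * X 1 ^ (M - (d 0 + d 1)) := by
  rw [HH_eq_sum]
  exact Finsupp.sum_single_index (by simp)

lemma HH_zero (M : ℕ) : HH M 0 = 0 := by simp [HH]

lemma HH_sum {α : Type*} (M : ℕ) (t : Finset α) (f : α → MvPolynomial (Fin 2) ℂ) :
    HH M (∑ i ∈ t, f i) = ∑ i ∈ t, HH M (f i) := by
  classical
  induction t using Finset.induction_on with
  | empty => simp [HH_zero]
  | insert x t' hx ih => rw [Finset.sum_insert hx, HH_add, ih, Finset.sum_insert hx]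

lemma single_apply_00 : (Finsupp.single (1:Fin 2) 1) (0:Fin 2) = 0 := by simp
lemma single_apply_11 : (Finsupp.single (1:Fin 2) 1) (1:Fin 2) = 1 := by simp

lemma pderiv0_HH (M : ℕ) (G : MvPolynomial (Fin 2) ℂ) :
    pderiv 0 (HH M G) = HH (M-1) (pderiv 1 G) := by
  conv_rhs => rw [G.as_sum]
  rw [map_sum, HH_sum, HH]
  rw [map_sum]
  refine Finset.sum_congr rfl fun d _ => ?_
  rw [pd_term0, pderiv_monomial, HH_monomial]
  rw [Finsupp.tsub_apply, Finsupp.tsub_apply, single_apply_00, single_apply_11]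
  rcases Nat.eq_zero_or_pos (d 1) with h1 | h1
  · simp [h1]
  · have he1 : M - 1 - (d 0 - 0 + (d 1 - 1)) = M - (d 0 + d 1) := by omega
    rw [he1, map_mul, MvPolynomial.C_eq_coe_nat, MvPolynomial.smul_eq_C_mul,
      MvPolynomial.C_eq_coe_nat]
    ring

lemma T1 (A : Spoly) (k : ℕ) : X 1 * ((k:ℂ) • (A * X 1 ^ (k-1))) = (k:ℂ) • (A * X 1 ^ k) := by
  cases k with
  | zero => simp
  | succ j =>
    rw [Nat.add_sub_cancel, MvPolynomial.smul_eq_C_mul, MvPolynomial.smul_eq_C_mul, pow_succ]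
    ring

lemma T2 (c : ℂ) (M d0 d1 : ℕ) :
    (C (c * (d0:ℂ)) * X 0 ^ (d1 - 0) * X 1 ^ ((M-1) - ((d0-1) + (d1-0))) : Spoly)
      = (d0:ℂ) • (C c * X 0 ^ d1 * X 1 ^ (M - (d0+d1))) := by
  cases d0 with
  | zero => simp
  | succ i =>
    have he : (M-1) - ((i+1-1) + (d1-0)) = M - ((i+1)+d1) := by omega
    have he2 : d1 - 0 = d1 := by omega
    rw [he, he2, MvPolynomial.smul_eq_C_mul, map_mul]
    ring

lemma T3 (c : ℂ) (M d0 d1 : ℕ) :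
    (X 0 * (C (c * (d1:ℂ)) * X 0 ^ (d1 - 1) * X 1 ^ ((M-1) - ((d0-0) + (d1-1)))) : Spoly)
      = (d1:ℂ) • (C c * X 0 ^ d1 * X 1 ^ (M - (d0+d1))) := by
  cases d1 with
  | zero => simp
  | succ j =>
    have he : (M-1) - ((d0-0) + (j+1-1)) = M - (d0+(j+1)) := by omega
    rw [he, Nat.add_sub_cancel, MvPolynomial.smul_eq_C_mul, map_mul, pow_succ]
    ring

lemma pderiv1_HH (M : ℕ) (G : MvPolynomial (Fin 2) ℂ) (hM : G.totalDegree ≤ M) :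
    X 1 * pderiv 1 (HH M G) =
      (M:ℂ) • HH M G - HH (M-1) (pderiv 0 G) - X 0 * HH (M-1) (pderiv 1 G) := by
  conv_rhs => rw [G.as_sum]
  rw [map_sum, map_sum, HH_sum, HH_sum, HH_sum, Finset.smul_sum, Finset.mul_sum,
    ← Finset.sum_sub_distrib, ← Finset.sum_sub_distrib, HH, map_sum, Finset.mul_sum]
  refine Finset.sum_congr rfl fun d hd => ?_
  have hle : d 0 + d 1 ≤ M := deg_le hM hd
  rw [pd_term1]
  simp only [pderiv_monomial, HH_monomial]
  simp only [Finsupp.tsub_apply, Finsupp.single_eq_same,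
    Finsupp.single_eq_of_ne (show (0:Fin 2) ≠ 1 by decide),
    Finsupp.single_eq_of_ne (show (1:Fin 2) ≠ 0 by decide)]
  rw [T1, T2, T3]
  rw [← sub_smul, ← sub_smul]
  congr 1
  have : (↑(M - (d 0 + d 1)) : ℂ) = ↑M - ↑(d 0 + d 1) := Nat.cast_sub hle
  push_cast at this ⊢
  rw [this]
  ring

lemma pd1_pow (m : ℕ) : pderiv 1 ((X 1 : Spoly) ^ m) = (m:ℂ) • (X 1 : Spoly) ^ (m-1) := by
  simpa using pd_term1 1 0 m

lemma pd0_pow (m : ℕ) : pderiv 0 ((X 1 : Spoly) ^ m) = 0 := by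
  simpa using pd_term0 1 0 m

lemma pd0_zpow_mul (m : ℕ) (A : Spoly) :
    pderiv 0 ((X 1 : Spoly) ^ m * A) = X 1 ^ m * pderiv 0 A := by
  rw [pderiv_mul, pd0_pow]; ring

lemma zpd (m : ℕ) (A : Spoly) :
    X 1 * pderiv 1 (X 1 ^ m * A) = (m:ℂ) • (X 1 ^ m * A) + X 1 ^ m * (X 1 * pderiv 1 A) := by
  rw [pderiv_mul, pd1_pow]
  cases m with
  | zero => simp
  | succ j =>
    rw [Nat.add_sub_cancel, MvPolynomial.smul_eq_C_mul, MvPolynomial.smul_eq_C_mul, pow_succ]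
    ring

lemma smul_cast (m : ℕ) (p : Spoly) : (m:ℂ) • p = (m : Spoly) * p := by
  rw [MvPolynomial.smul_eq_C_mul, MvPolynomial.C_eq_coe_nat]

lemma bridge {G : MvPolynomial (Fin 2) ℂ} {g : Spoly} {n : ℕ} (hn : 1 ≤ n)
    (hg : ι g = ι (X 1) ^ n * φ G) :
    ι (pderiv 0 g) = ι (X 1) ^ (n-1) * φ (pderiv 1 G) ∧
    ι (X 1) * ι (pderiv 1 g) = (n : FractionRing Spoly) * (ι (X 1) ^ n * φ G)
      - ι (X 1) ^ (n-1) * φ (pderiv 0 G)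
      - ι (X 0) * (ι (X 1) ^ (n-1) * φ (pderiv 1 G)) := by
  set M := n + 1 + G.totalDegree + (pderiv 0 G).totalDegree + (pderiv 1 G).totalDegree with hM
  have hnM : n ≤ M := by omega
  have hd0 : G.totalDegree ≤ M := by omega
  have hd1 : (pderiv 0 G).totalDegree ≤ M - 1 := by omega
  have hd2 : (pderiv 1 G).totalDegree ≤ M - 1 := by omega
  have hu := u_ne
  have hup : ι (X 1) ^ (M - n) ≠ 0 := pow_ne_zero _ hu
  have hmg : (X 1 : Spoly) ^ (M - n) * g = HH M G := by
    apply iota_inj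
    rw [map_mul, map_pow, hg, iota_HH hd0, ← mul_assoc, ← pow_add, Nat.sub_add_cancel hnM]
  constructor
  · have h1 : (X 1 : Spoly) ^ (M - n) * pderiv 0 g = HH (M-1) (pderiv 1 G) := by
      rw [← pd0_zpow_mul, hmg, pderiv0_HH]
    have h2 := congrArg ι h1
    rw [map_mul, map_pow, iota_HH hd2] at h2
    apply mul_left_cancel₀ hup
    rw [h2, ← mul_assoc, ← pow_add]
    congr 2
    omega
  · have h1 : X 1 * pderiv 1 ((X 1 : Spoly) ^ (M - n) * g)
        = ((M:ℂ)) • HH M G - HH (M-1) (pderiv 0 G) - X 0 * HH (M-1) (pderiv 1 G) := by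
      rw [hmg, pderiv1_HH M G hd0]
    rw [zpd, hmg] at h1
    rw [smul_cast, smul_cast] at h1
    have hcast : ((M:Spoly)) = ((M-n:ℕ):Spoly) + (n:Spoly) := by
      rw [← Nat.cast_add, Nat.sub_add_cancel hnM]
    have h2 : (X 1:Spoly) ^ (M-n) * (X 1 * pderiv 1 g)
        = (n:Spoly) * HH M G - HH (M-1) (pderiv 0 G) - X 0 * HH (M-1) (pderiv 1 G) := by
      linear_combination h1 + HH M G * hcast
    have h3 := congrArg ι h2
    simp only [map_sub, map_mul, map_pow, map_natCast] at h3
    rw [iota_HH hd0, iota_HH hd1, iota_HH hd2] at h3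
    apply mul_left_cancel₀ hup
    have hpow : ι (X 1) ^ M = ι (X 1) ^ (M - n) * ι (X 1) ^ n := by
      rw [← pow_add]; congr 1; omega
    have hpow1 : ι (X 1) ^ (M-1) = ι (X 1) ^ (M - n) * ι (X 1) ^ (n-1) := by
      rw [← pow_add]; congr 1; omega
    rw [← mul_assoc, ← mul_assoc] at h3 ⊢
    rw [h3, hpow, hpow1]
    ring

/-- Computing the invariant `η` at a point at infinity: if
`η'(ω,C,a) = (k_z : k : w)`, then
`η(ω,C,a) = (k - (deg C)·k_z : w - (deg ω + 2)·k_z)`, i.e. `η` is the linear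
projection of `η'` from the point `(1 : deg C : deg ω + 2)`. -/
theorem eta_at_infinity
    (s e : ℕ) (hs : 1 ≤ s) (he : 1 ≤ e)
    (P Q C K : MvPolynomial (Fin 2) ℂ)
    (h : pderiv 0 C * Q - pderiv 1 C * P = C * K)
    (P' Q' C' K' W' : Spoly)
    (hP' : ι P' = ι (X 1) ^ s * φ P)
    (hQ' : ι Q' = ι (X 1) ^ s * φ Q)
    (hC' : ι C' = ι (X 1) ^ e * φ C)
    (hK' : ι K' = ι (X 1) ^ (s - 1) * φ K)
    (hW' : ι W' = ι (X 1) ^ (s - 1) * φ (pderiv 0 Q - pderiv 1 P))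
    (a : Fin 2 → ℂ) (ha : eval a C' ≠ 0)
    (kz k w : ℂ)
    (hkz : kz = -(eval a Q'))
    (hw : w = eval a (pderiv 0 (-(P' + X 0 * Q')) - pderiv 1 (X 1 * Q')))
    (hk : eval a (-(pderiv 0 C') * (P' + X 0 * Q') - X 1 * pderiv 1 C' * Q')
      = eval a C' * k) :
    eval a K' = k - (e : ℂ) * kz ∧
    eval a W' = w - ((s : ℂ) + 2) * kz := by
  obtain ⟨s', rfl⟩ : ∃ s', s = s' + 1 := ⟨s - 1, by omega⟩
  obtain ⟨e', rfl⟩ : ∃ e', e = e' + 1 := ⟨e - 1, by omega⟩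
  simp only [Nat.add_sub_cancel] at hK' hW'
  obtain ⟨bP1, bP2⟩ := bridge hs hP'
  obtain ⟨bQ1, bQ2⟩ := bridge hs hQ'
  obtain ⟨bC1, bC2⟩ := bridge he hC'
  simp only [Nat.add_sub_cancel] at bP1 bP2 bQ1 bQ2 bC1 bC2
  have hu := u_ne
  have φh := congrArg φ h
  simp only [map_sub, map_mul] at φh
  -- Identity I₁
  have I1 : (-(pderiv 0 C') * (P' + X 0 * Q') - X 1 * pderiv 1 C' * Q' : Spoly)
      = C' * K' - ((e' + 1 : ℕ) : Spoly) * (C' * Q') := by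
    apply iota_inj
    simp only [map_sub, map_mul, map_add, map_neg, map_natCast]
    rw [hP', hQ', hC', hK', bC1]
    linear_combination (-(ι (X 1) ^ (s'+1) * φ Q)) * bC2
      + (ι (X 1) ^ e' * ι (X 1) ^ (s'+1)) * φh
  -- Identity I₂
  have expand : (pderiv 0 (-(P' + X 0 * Q')) - pderiv 1 (X 1 * Q') : Spoly)
      = -pderiv 0 P' - X 0 * pderiv 0 Q' - 2 * Q' - X 1 * pderiv 1 Q' := by
    simp only [map_neg, map_add, pderiv_mul, pderiv_X_self,
      pderiv_X_of_ne (show (1:Fin 2) ≠ 0 by decide),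
      pderiv_X_of_ne (show (0:Fin 2) ≠ 1 by decide)]
    ring
  have I2 : (pderiv 0 (-(P' + X 0 * Q')) - pderiv 1 (X 1 * Q') : Spoly)
      = W' - (((s' + 1 : ℕ) : Spoly) + 2) * Q' := by
    apply iota_inj
    rw [expand]
    simp only [map_sub, map_mul, map_add, map_neg, map_natCast, map_ofNat]
    rw [hQ', hW', bP1, bQ1]
    simp only [map_sub]
    linear_combination (-1 : FractionRing Spoly) * bQ2
  constructor
  · have e1 := congrArg (eval a) I1
    rw [hk] at e1
    simp only [map_sub, map_mul, map_natCast] at e1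
    have e2 : eval a C' * k = eval a C' * (eval a K' - ((e' + 1 : ℕ) : ℂ) * eval a Q') := by
      rw [e1]; ring
    have e3 := mul_left_cancel₀ ha e2
    rw [hkz, e3]
    push_cast
    ring
  · have e1 := congrArg (eval a) I2
    rw 
 [← hw] at e1
    simp only [map_sub, map_mul, map_add, map_natCast, map_ofNat] at e1
    rw [hkz, e1]
    push_cast
    ring
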